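/- Let f, h ∈ F_q[X] be non-constant, t₀ ∈ F_q, and suppose f(h(X)) - t₀ splits into distinct linear factors over F_q. If α is a root of f(X) - t₀ in the algebraic closure of F_q, then α ∈ F_q and h(X) - α splits into deg h distinct linear factors over F_q. -/

import Mathlib

open Polynomial

namespace Polynomial

theorem sub_C_eval_dvd_comp_of_isRoot {R : Type*} [CommRing R] {p q : R[X]} {b : R}
    (hroot : p.IsRoot (q.eval b)) : q - C (q.eval b) ∣ p.comp q := by
  obtain ⟨r, hr⟩ := dvd_iff_isRoot.mpr hroot
  exact ⟨r.comp q, by rw [hr, mul_comp, sub_comp, X_comp, C_comp]⟩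

theorem nodup_roots_of_squarefree {R : Type*} [CommRing R] [IsDomain R] {p : R[X]}
    (hp : Squarefree p) : p.roots.Nodup := by
  classical
  refine Multiset.nodup_iff_count_le_one.mpr fun r ↦ ?_
  rw [count_roots]
  by_contra! hr
  have hsq : (X - C r) * (X - C r) ∣ p :=
    (sq (X - C r) ▸ pow_dvd_pow _ hr).trans (pow_rootMultiplicity_dvd p r)
  exact not_isUnit_X_sub_C r (hp _ hsq)

theorem Splits.card_roots_toFinset_of_squarefree {K : Type*} [Field K] [DecidableEq K]
    {p : K[X]} (hsplit : p.Splits) (hp : Squarefree p) :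
    p.roots.toFinset.card = p.natDegree := by
  rw [Multiset.toFinset_card_of_nodup (nodup_roots_of_squarefree hp),
    splits_iff_card_roots.mp hsplit]

/-- Over an algebraically closed `K`, a root `α` of `p` can be written as `q β`, and `β` is
then a root of the split polynomial `p ∘ q`, hence comes from `F`. -/
theorem Splits.exists_algebraMap_eval_eq_of_aeval_eq_zero {F K : Type*} [Field F] [Field K]
    [IsAlgClosed K] [Algebra F K] {p q : F[X]} (hsplit : (p.comp q).Splits)
    (hne : p.comp q ≠ 0) (hq : q.natDegree ≠ 0) {α : K} (hα : aeval α p = 0) :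
    ∃ b : F, algebraMap F K (q.eval b) = α ∧ (p.comp q).IsRoot b := by
  obtain ⟨β, hβ : (q.map (algebraMap F K)).eval β = α⟩ := IsAlgClosed.eval_surjective
    (p := q.map (algebraMap F K)) (by rwa [natDegree_map]) α
  have hβroot : ((p.comp q).map (algebraMap F K)).IsRoot β := by
    rwa [IsRoot, map_comp, eval_comp, hβ, eval_map_algebraMap]
  obtain ⟨b, rfl⟩ := hsplit.mem_range_of_isRoot hne hβroot
  have hqb : algebraMap F K (q.eval b) = α := by rw [← hβ, eval_map_apply]
  refine ⟨b, hqb, (algebraMap F K).injective ?_⟩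
  rwa [map_zero, ← eval_map_apply]

end Polynomial

theorem root_in_base_and_inner_splits_general {F : Type*} [Field F] [DecidableEq F]
    (f h : F[X]) (hh : 1 ≤ h.natDegree) (t₀ : F)
    (hsplit : (f.comp h - C t₀).Splits)
    (hsep : Squarefree (f.comp h - C t₀))
    (α : AlgebraicClosure F)
    (hα : Polynomial.aeval α (f - C t₀) = 0) :
    ∃ a : F, algebraMap F (AlgebraicClosure F) a = α ∧
      (h - C a).Splits ∧ Squarefree (h - C a) ∧
      (h - C a).roots.toFinset.card = h.natDegree := by
  have hcomp : (f - C t₀).comp h = f.comp h - C t₀ := by rw [sub_comp, C_comp]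
  rw [← hcomp] at hsplit hsep
  obtain ⟨b, hbα, hb⟩ := hsplit.exists_algebraMap_eval_eq_of_aeval_eq_zero hsep.ne_zero
    (by omega) hα
  have hdvd := sub_C_eval_dvd_comp_of_isRoot (by rwa [IsRoot, eval_comp] at hb)
  have hinner_split : (h - C (h.eval b)).Splits := hsplit.of_dvd hsep.ne_zero hdvd
  have hinner_sqfree : Squarefree (h - C (h.eval b)) := hsep.squarefree_of_dvd hdvd
  refine ⟨h.eval b, hbα, hinner_split, hinner_sqfree, ?_⟩
  rw [hinner_split.card_roots_toFinset_of_squarefree hinner_sqfree, natDegree_sub_C]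

/-- If `f(h(X)) - t₀` splits into distinct linear factors over `F` and `α` is
a root of `f(X) - t₀` in the algebraic closure of `F`, then `α ∈ F` and `h(X) - α` splits
into `deg h` distinct linear factors over `F`. -/
theorem root_in_base_and_inner_splits {F : Type*} [Field F] [DecidableEq F]
    (f h : F[X]) (hf : 1 ≤ f.natDegree) (hh : 1 ≤ h.natDegree) (t₀ : F)
    (hsplit : (f.comp h - C t₀).Splits)
    (hsep : Squarefree (f.comp h - C t₀))
    (α : AlgebraicClosure F)
    (hα : Polynomial.aeval α (f - C t₀) = 0) :
    ∃ a : F, algebraMap F (AlgebraicClosure F) a = α ∧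
      (h - C a).Splits ∧ Squarefree (h - C a) ∧
      (h - C a).roots.toFinset.card = h.natDegree :=
  root_in_base_and_inner_splits_general f h hh t₀ hsplit hsep α hα
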